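/- For all nonnegative integers n and \ell, the Bell numbers satisfy Spivey's formula: B_{n+\ell} = \sum_{j=0}^{\ell} \sum_{k=0}^{n} S(\ell, j) \binom{n}{k} j^{n-k} B_k, where S(\ell,j) are the Stirling numbers of the second kind and B_k = \sum_{j=0}^k S(k,j) are the Bell numbers. -/

import Mathlib

/-!
The r-Bell numbers `B(n, r)` satisfy `B(n+1, r) = r B(n, r) + B(n, r+1)`, the transpose of the
Stirling recurrence `S(ℓ+1, j) = S(ℓ, j-1) + j S(ℓ, j)`. Hence `∑ⱼ S(ℓ, j) B(n, j)` does not change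
when `n` grows by one and `ℓ` drops by one, and since `B(0, j) = 1` it equals `B(n + ℓ)`. Taking
`ℓ = 0` gives `B(n, 0) = B(n)`, and Pascal's rule gives `B(n, r) = ∑ₖ C(n, k) r^(n-k) B(k)`.
-/

/-- The Stirling numbers of the second kind, via `S(n,k) = S(n-1,k-1) + k * S(n-1,k)`. -/
def stirling2 : ℕ → ℕ → ℕ
  | 0, 0 => 1
  | 0, _ + 1 => 0
  | _ + 1, 0 => 0
  | n + 1, k + 1 => stirling2 n k + (k + 1) * stirling2 n (k + 1)

/-- The Bell numbers: the sum over k ≤ n of `S(n,k)`. -/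
def bell (n : ℕ) : ℕ := ∑ k ∈ Finset.range (n + 1), stirling2 n k

open Finset

theorem stirling2_eq_stirlingSecond : ∀ n k, stirling2 n k = Nat.stirlingSecond n k
  | 0, 0 | 0, _ + 1 | _ + 1, 0 => rfl
  | n + 1, k + 1 => by
    rw [stirling2, Nat.stirlingSecond_succ_succ, stirling2_eq_stirlingSecond n k,
      stirling2_eq_stirlingSecond n (k + 1), add_comm]

theorem sum_stirling2_succ_smul {M : Type*} [AddCommMonoid M] (ℓ : ℕ) (f : ℕ → M) :
    ∑ j ∈ range (ℓ + 2), stirling2 (ℓ + 1) j • f j =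
      ∑ j ∈ range (ℓ + 1), stirling2 ℓ j • (j • f j + f (j + 1)) := by
  -- `j S(ℓ, j) f j` vanishes at `j = 0` and at `j = ℓ + 1`, so shifting the index keeps its sum.
  have hshift : ∑ j ∈ range (ℓ + 1), ((j + 1) * stirling2 ℓ (j + 1)) • f (j + 1) =
      ∑ j ∈ range (ℓ + 1), (stirling2 ℓ j * j) • f j := by
    have htop : stirling2 ℓ (ℓ + 1) = 0 := by
      rw [stirling2_eq_stirlingSecond, Nat.stirlingSecond_eq_zero_of_lt (by omega)]
    have := (sum_range_succ' (fun j ↦ (j * stirling2 ℓ j) • f j) (ℓ + 1)).symm.trans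
      (sum_range_succ _ (ℓ + 1))
    simpa [htop, mul_comm] using this
  rw [sum_range_succ', stirling2, zero_smul, add_zero]
  simp only [stirling2, add_smul, sum_add_distrib, smul_add, smul_smul]
  rw [hshift, add_comm]

/-- The r-Bell numbers: `rBell n r` counts the partitions of an `(n + r)`-element set in which
`r` given elements lie in distinct blocks. -/
def rBell : ℕ → ℕ → ℕ
  | 0, _ => 1
  | n + 1, r => r * rBell n r + rBell n (r + 1)

theorem rBell_add (n r s : ℕ) :
    rBell n (r + s) = ∑ k ∈ range (n + 1), n.choose k * s ^ (n - k) * rBell k r := by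
  induction n generalizing r with
  | zero => simp [rBell]
  | succ n ih =>
    have pascal := sum_choose_succ_mul (fun k m ↦ s ^ m * rBell k r) n
    simp only [Nat.cast_id, ← mul_assoc] at pascal
    rw [rBell, ih, add_right_comm, ih, pascal, mul_sum, ← sum_add_distrib, ← sum_add_distrib]
    refine sum_congr rfl fun k hk ↦ ?_
    rw [show n + 1 - k = n - k + 1 by grind, rBell, pow_succ]
    ring

theorem bell_add_eq_sum_stirling2_mul_rBell (n ℓ : ℕ) :
    bell (n + ℓ) = ∑ j ∈ range (ℓ + 1), stirling2 ℓ j * rBell n j := by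
  induction n generalizing ℓ with
  | zero => simp [bell, rBell]
  | succ n ih =>
    have hstirling := sum_stirling2_succ_smul ℓ (rBell n)
    simp only [smul_eq_mul] at hstirling
    rw [show n + 1 + ℓ = n + (ℓ + 1) by omega, ih, hstirling]
    simp only [rBell]

theorem rBell_zero_right (n : ℕ) : rBell n 0 = bell n := by
  simpa [stirling2] using (bell_add_eq_sum_stirling2_mul_rBell n 0).symm

theorem rBell_eq_sum_choose_mul_bell (n r : ℕ) :
    rBell n r = ∑ k ∈ range (n + 1), n.choose k * r ^ (n - k) * bell k := by
  simpa [rBell_zero_right] using rBell_add n 0 r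

theorem bell_spivey (n ℓ : ℕ) :
    bell (n + ℓ) =
      ∑ j ∈ Finset.range (ℓ + 1), ∑ k ∈ Finset.range (n + 1),
        stirling2 ℓ j * n.choose k * j ^ (n - k) * bell k := by
  rw [bell_add_eq_sum_stirling2_mul_rBell]
  simp only [rBell_eq_sum_choose_mul_bell, mul_sum, mul_assoc]
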